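/- For α, β ∈ ℂ, let T(α) denote the 6-dimensional anticommutative algebra with basis e1,...,e6 and nonzero products e1e2 = e3, e1e3 = e4, e1e5 = (α+1)e6, e2e3 = e5, e2e4 = αe6. Then T(α) is isomorphic to T(-α-1). -/
import Mathlib


/-- The 6-dimensional algebra `T⁶₀₉(α)` with `e₁e₂=e₃, e₁e₃=e₄,
e₁e₅=(α+1)e₆, e₂e₃=e₅, e₂e₄=αe₆` (anticommutative, other products zero). -/
def mulT609 (α : ℂ) (x y : Fin 6 → ℂ) : Fin 6 → ℂ :=
  ![0, 0, x 0 * y 1 - x 1 * y 0, x 0 * y 2 - x 2 * y 0,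
    x 1 * y 2 - x 2 * y 1,
    (α + 1) * (x 0 * y 4 - x 4 * y 0) + α * (x 1 * y 3 - x 3 * y 1)]

@[simp] lemma matrix_cons_val_five {X : Type*} (a b c d e f : X) :
    ![a, b, c, d, e, f] 5 = f := rfl

/-- The involutive linear map implementing the isomorphism. -/
def swapT609 : (Fin 6 → ℂ) →ₗ[ℂ] (Fin 6 → ℂ) where
  toFun u := ![u 1, u 0, -u 2, -u 4, -u 3, u 5]
  map_add' u v := by
    funext i; fin_cases i <;> simp [Matrix.cons_val_succ] <;> ring
  map_smul' c u := by
    funext i; fin_cases i <;> simp [Matrix.cons_val_succ] <;> ring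

lemma swapT609_invol (u : Fin 6 → ℂ) : swapT609 (swapT609 u) = u := by
  funext i; fin_cases i <;> simp [swapT609, Matrix.cons_val_succ]

/-- `T⁶₀₉(α)` is isomorphic to `T⁶₀₉(-α-1)`. -/
theorem T609_iso_neg_sub_one (α : ℂ) :
    ∃ e : (Fin 6 → ℂ) ≃ₗ[ℂ] (Fin 6 → ℂ),
      ∀ u v : Fin 6 → ℂ, e (mulT609 α u v) = mulT609 (-α - 1) (e u) (e v) := by
  refine ⟨LinearEquiv.ofLinear swapT609 swapT609 ?_ ?_, ?_⟩
  · exact LinearMap.ext fun u => swapT609_invol u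
  · exact LinearMap.ext fun u => swapT609_invol u
  · intro u v
    funext i
    fin_cases i <;> simp [swapT609, mulT609, Matrix.cons_val_succ] <;> ring
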